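/- Let G be a finite simple graph on a nonempty vertex set V, α : V → V → ℝ antisymmetric, E₀ a set of edges of G, and G' = G − E₀ the graph with the edges in E₀ deleted. Then for every 1 ≤ k ≤ |V|, the k-th magnetic Cheeger constant with combinatorial weights satisfies h_k(G', α) ≤ h_k(G, α). -/

import Mathlib

open scoped Classical

/-- The frustration index of the subgraph of `(G, α)` induced on `V₀` (with
combinatorial weights): the infimum over `τ : V → ℝ` of
`Σ_{{v,u} ∈ E(G[V₀])} |exp(i·τ(u)) − exp(−i·α v u)·exp(i·τ(v))|`, each
unordered edge counted once (hence the factor `1/2` over ordered pairs). -/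
noncomputable def frustration {V : Type} [Fintype V]
    (G : SimpleGraph V) (α : V → V → ℝ) (V₀ : Finset V) : ℝ :=
  ⨅ τ : V → ℝ, (1 / 2) * ∑ v ∈ V₀, ∑ u ∈ V₀,
    if G.Adj v u then
      ‖(Complex.exp (Complex.I * (τ u : ℝ))
        - Complex.exp (-(Complex.I * (α v u : ℝ))) * Complex.exp (Complex.I * (τ v : ℝ)))‖
    else 0

/-- The magnetic isoperimetric ratio
`h(G, α, V₀) = (ι(G[V₀], α) + |E(V₀, V∖V₀)|) / |V₀|` with combinatorial
weights; edges from `V₀` to its complement are counted by the ordered pairs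
`(v, u)` with `v ∈ V₀`, `u ∉ V₀`, `v ∼ u` (each such edge appearing once). -/
noncomputable def cheegerRatio {V : Type} [Fintype V]
    (G : SimpleGraph V) (α : V → V → ℝ) (V₀ : Finset V) : ℝ :=
  (frustration G α V₀ +
      ((Finset.univ.filter
        (fun p : V × V => G.Adj p.1 p.2 ∧ p.1 ∈ V₀ ∧ p.2 ∉ V₀)).card : ℝ))
    / (V₀.card : ℝ)

/-- The `k`-th magnetic Cheeger constant with combinatorial weights:
`h_k(G, α) = min` over families of `k` pairwise disjoint nonempty vertex sets
of the maximum of the isoperimetric ratios. -/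
noncomputable def cheeger {V : Type} [Fintype V]
    (G : SimpleGraph V) (α : V → V → ℝ) (k : ℕ) : ℝ :=
  sInf { x : ℝ | ∃ P : Fin k → Finset V,
    (∀ i, (P i).Nonempty) ∧ (∀ i j, i ≠ j → Disjoint (P i) (P j)) ∧
    x = ⨆ i, cheegerRatio G α (P i) }

/-! Both the frustration index and the boundary count are sums of nonnegative terms over the
edges, so they can only grow with the edge set; since the admissible families of vertex sets do
not depend on the graph, the same holds for every Cheeger constant `h_k`. -/

theorem frustration_nonneg {V : Type} [Fintype V] (G : SimpleGraph V) (α : V → V → ℝ)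
    (V₀ : Finset V) : 0 ≤ frustration G α V₀ :=
  Real.iInf_nonneg fun _ => by positivity

theorem frustration_mono {V : Type} [Fintype V] {G' G : SimpleGraph V} (h : G' ≤ G)
    (α : V → V → ℝ) (V₀ : Finset V) : frustration G' α V₀ ≤ frustration G α V₀ := by
  refine ciInf_mono ⟨0, Set.forall_mem_range.2 fun _ => by positivity⟩ fun τ => ?_
  gcongr with v _ u _
  by_cases hG' : G'.Adj v u
  · simp [hG', h hG']
  · simp only [hG', if_false]
    positivity

theorem cheegerRatio_nonneg {V : Type} [Fintype V] (G : SimpleGraph V) (α : V → V → ℝ)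
    (V₀ : Finset V) : 0 ≤ cheegerRatio G α V₀ := by
  have := frustration_nonneg G α V₀
  unfold cheegerRatio
  positivity

theorem cheegerRatio_mono {V : Type} [Fintype V] {G' G : SimpleGraph V} (h : G' ≤ G)
    (α : V → V → ℝ) (V₀ : Finset V) : cheegerRatio G' α V₀ ≤ cheegerRatio G α V₀ := by
  unfold cheegerRatio
  gcongr ?_ / _
  exact add_le_add (frustration_mono h α V₀) <| Nat.cast_le.2 <| Finset.card_le_card <|
    Finset.monotone_filter_right _ fun _ _ hp => ⟨h hp.1, hp.2⟩

theorem cheeger_eq_iInf {V : Type} [Fintype V] (G : SimpleGraph V) (α : V → V → ℝ) (k : ℕ) :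
    cheeger G α k = ⨅ P : {P : Fin k → Finset V //
        (∀ i, (P i).Nonempty) ∧ ∀ i j, i ≠ j → Disjoint (P i) (P j)},
      ⨆ i, cheegerRatio G α (P.1 i) := by
  unfold cheeger iInf
  congr 1
  ext x
  simp [eq_comm, and_assoc]

theorem cheeger_mono {V : Type} [Fintype V] {G' G : SimpleGraph V} (h : G' ≤ G)
    (α : V → V → ℝ) (k : ℕ) : cheeger G' α k ≤ cheeger G α k := by
  -- no hypothesis on `k` is needed: without admissible families both sides are `sInf ∅ = 0`
  rw [cheeger_eq_iInf, cheeger_eq_iInf]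
  refine ciInf_mono ⟨0, Set.forall_mem_range.2 fun P =>
    Real.iSup_nonneg fun i => cheegerRatio_nonneg G' α (P.1 i)⟩ fun P => ?_
  exact ciSup_mono (Set.finite_range _).bddAbove fun i => cheegerRatio_mono h α (P.1 i)

theorem stmt19_general {V : Type} [Fintype V]
    (G : SimpleGraph V) (E₀ : Set (Sym2 V))
    (α : V → V → ℝ) :
    ∀ k : ℕ, 1 ≤ k → k ≤ Fintype.card V →
      cheeger (G.deleteEdges E₀) α k ≤ cheeger G α k :=
  fun k _ _ => cheeger_mono (G.deleteEdges_le E₀) α k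

/-- deleting edges decreases all magnetic Cheeger constants:
`h_k(G − E₀, α) ≤ h_k(G, α)` for all `1 ≤ k ≤ |V|`. -/
theorem stmt19 {V : Type} [Fintype V] [DecidableEq V] [Nonempty V]
    (G : SimpleGraph V) (E₀ : Set (Sym2 V))
    (α : V → V → ℝ) (hα : ∀ v u, α v u = - α u v) :
    ∀ k : ℕ, 1 ≤ k → k ≤ Fintype.card V →
      cheeger (G.deleteEdges E₀) α k ≤ cheeger G α k :=
  stmt19_general G E₀ α
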